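/- arXiv:math/0408263 — 5 statements merged into one kernel-verified Lean document; each statement's English description precedes it below -/
import Mathlib

section
/- For every integer r ≥ 2, ∑_φ (−1)^{k(φ)} = μ(r), where the sum extends over all ordered factorizations φ of r into factors each ≥ 2, k(φ) is the number of factors of φ, and μ is the Möbius function. (For r = 1 the only factorization is empty, giving sum 1 = μ(1).) -/
/-!
Stripping the first factor `d` of an ordered factorization of `n ≠ 1` leaves an ordered
factorization of `n / d`, so `f n := ∑ (-1)^k(φ)` satisfies `f 1 = 1` and
`f n = -∑_{d ∣ n, d ≠ 1} f (n / d)`. This is the recursion `∑_{d ∣ n} f (n / d) = [n = 1]`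
that characterizes `μ`.
-/

open Finset ArithmeticFunction

open scoped ArithmeticFunction.Moebius

theorem ArithmeticFunction.moebius_eq_neg_sum_divisors_erase_one {n : ℕ} (hn : n ≠ 1) :
    μ n = -∑ d ∈ n.divisors.erase 1, μ (n / d) := by
  rcases eq_or_ne n 0 with rfl | hn0
  · simp
  have hsum : ∑ d ∈ n.divisors, μ (n / d) = 0 := by
    rw [Nat.sum_div_divisors n (fun d => μ d), ← coe_mul_zeta_apply, moebius_mul_coe_zeta,
      one_apply_ne hn]
  rw [← add_sum_erase _ _ (Nat.one_mem_divisors.2 hn0), Nat.div_one] at hsum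
  linarith

theorem Nat.div_lt_self_of_mem_divisors_erase_one {n d : ℕ} (hd : d ∈ n.divisors.erase 1) :
    n / d < n := by
  obtain ⟨hd1, hdn, hn0⟩ := by simpa only [mem_erase, Nat.mem_divisors] using hd
  have := Nat.pos_of_dvd_of_pos hdn (Nat.pos_of_ne_zero hn0)
  exact Nat.div_lt_self (by omega) (by omega)

def orderedFactorizations (n : ℕ) : Finset (List ℕ) :=
  if n = 1 then {[]}
  else (n.divisors.erase 1).attach.biUnion fun d => (orderedFactorizations (n / d)).image (d.1 :: ·)
decreasing_by exact Nat.div_lt_self_of_mem_divisors_erase_one d.2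

theorem orderedFactorizations_one : orderedFactorizations 1 = {[]} := by
  rw [orderedFactorizations, if_pos rfl]

theorem orderedFactorizations_of_ne_one {n : ℕ} (hn : n ≠ 1) :
    orderedFactorizations n = (n.divisors.erase 1).attach.biUnion
      fun d => (orderedFactorizations (n / d)).image (d.1 :: ·) := by
  rw [orderedFactorizations, if_neg hn]

theorem mem_orderedFactorizations {n : ℕ} {l : List ℕ} :
    l ∈ orderedFactorizations n ↔ (∀ a ∈ l, 2 ≤ a) ∧ l.prod = n := by
  induction l generalizing n with
  | nil =>
    rcases eq_or_ne n 1 with rfl | hn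
    · simp [orderedFactorizations_one]
    · simp [orderedFactorizations_of_ne_one hn, hn.symm]
  | cons a t ih =>
    rcases eq_or_ne n 1 with rfl | hn
    · simp only [orderedFactorizations_one, mem_singleton, reduceCtorEq, false_iff, not_and,
        List.forall_mem_cons, List.prod_cons]
      rintro ⟨ha, -⟩ h
      have := Nat.eq_one_of_mul_eq_one_right h
      omega
    · have hcons : a :: t ∈ orderedFactorizations n ↔
          a ∈ n.divisors.erase 1 ∧ t ∈ orderedFactorizations (n / a) := by
        simp [orderedFactorizations_of_ne_one hn, and_comm]
      rw [hcons, ih, mem_erase, Nat.mem_divisors, List.forall_mem_cons, List.prod_cons]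
      constructor
      · rintro ⟨⟨ha1, han, hn0⟩, ht, htn⟩
        have := Nat.pos_of_dvd_of_pos han (Nat.pos_of_ne_zero hn0)
        exact ⟨⟨by omega, ht⟩, htn ▸ Nat.mul_div_cancel' han⟩
      · rintro ⟨⟨ha, ht⟩, rfl⟩
        have htprod : t.prod ≠ 0 := List.prod_ne_zero fun h => by have := ht 0 h; omega
        exact ⟨⟨by omega, dvd_mul_right a _, mul_ne_zero (by omega) htprod⟩, ht,
          (Nat.mul_div_cancel_left _ (by omega)).symm⟩

theorem sum_orderedFactorizations_neg_one_pow_length (n : ℕ) :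
    ∑ l ∈ orderedFactorizations n, (-1 : ℤ) ^ l.length = μ n := by
  induction n using Nat.strong_induction_on with
  | _ n ih =>
  rcases eq_or_ne n 1 with rfl | hn
  · simp [orderedFactorizations_one]
  rw [orderedFactorizations_of_ne_one hn, sum_biUnion, moebius_eq_neg_sum_divisors_erase_one hn,
    ← sum_attach (n.divisors.erase 1), ← sum_neg_distrib]
  · refine sum_congr rfl fun d _ => ?_
    rw [sum_image fun _ _ _ _ h => List.cons_injective h,
      ← ih _ (Nat.div_lt_self_of_mem_divisors_erase_one d.2)]
    simp [pow_succ]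
  · intro d _ e _ hde
    simp only [Function.onFun, disjoint_left, mem_image]
    rintro _ ⟨l, -, rfl⟩ ⟨l', -, h⟩
    exact hde (Subtype.ext (List.cons_eq_cons.1 h).1.symm)

theorem sum_orderedFactorizations_neg_one_pow_general (r : ℕ) :
    (∑ᶠ φ : {l : List ℕ // (∀ a ∈ l, 2 ≤ a) ∧ l.prod = r},
        ((-1 : ℤ) ^ (φ : List ℕ).length)) = ArithmeticFunction.moebius r := by
  rw [finsum_subtype_eq_finsum_cond (f := fun l : List ℕ => (-1 : ℤ) ^ l.length)]
  simp_rw [← mem_orderedFactorizations, ← Finset.mem_coe]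
  rw [finsum_mem_coe_finset, sum_orderedFactorizations_neg_one_pow_length]

/-- For every integer `r ≥ 2`, the sum of `(-1)^{k(φ)}` over all ordered factorizations
`φ` of `r` into factors each `≥ 2` (where `k(φ)` is the number of factors) equals `μ(r)`. -/
theorem sum_orderedFactorizations_neg_one_pow (r : ℕ) (hr : 2 ≤ r) :
    (∑ᶠ φ : {l : List ℕ // (∀ a ∈ l, 2 ≤ a) ∧ l.prod = r},
        ((-1 : ℤ) ^ (φ : List ℕ).length)) = ArithmeticFunction.moebius r :=
  sum_orderedFactorizations_neg_one_pow_general r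
end

section
/- Let σ be a permutation of {1,...,n} such that R_n[σ(j)][j] = 1 for all j (i.e., σ contributes a nonzero term to the permanent of R_n). Then every cycle of σ not containing the element 1 is a fixed point, and the elements of the cycle containing 1 form a chain under divisibility. -/
open Matrix

/-- The Redheffer matrix. -/
def redheffer (n : ℕ) : Matrix (Fin n) (Fin n) ℤ :=
  fun i j => if ((i : ℕ) + 1) ∣ ((j : ℕ) + 1) ∨ (j : ℕ) + 1 = 1 then 1 else 0

/-- If `σ` contributes a nonzero term to the permanent of the Redheffer matrix, then
every cycle of `σ` not containing the element `1` is a fixed point, and the elements of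
the cycle containing `1` form a chain under divisibility.  (Here the element of `Fin n`
with value `i` represents the integer `i + 1`, so `1` is represented by `⟨0, hn⟩`.) -/
theorem redheffer_contributing_perm_structure (n : ℕ) (hn : 0 < n)
    (σ : Equiv.Perm (Fin n)) (hσ : ∀ j, redheffer n (σ j) j = 1) :
    (∀ j : Fin n, ¬ σ.SameCycle ⟨0, hn⟩ j → σ j = j) ∧
    IsChain (fun a b : Fin n => ((a : ℕ) + 1) ∣ ((b : ℕ) + 1))
      {j : Fin n | σ.SameCycle ⟨0, hn⟩ j} := by
  set z : Fin n := ⟨0, hn⟩ with hzdef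
  have hdvd : ∀ j : Fin n, j ≠ z → ((σ j : ℕ) + 1) ∣ ((j : ℕ) + 1) := by
    intro j hj
    have h := hσ j
    unfold redheffer at h
    split_ifs at h with hc
    · rcases hc with hc | hc
      · exact hc
      · exact absurd (Fin.ext (by simpa [hzdef] using (by omega : (j : ℕ) = 0))) hj
    · exact absurd h (by norm_num)
  have fix : ∀ m : ℕ, ∀ j : Fin n, (j : ℕ) = m → ¬ σ.SameCycle z j → σ j = j := by
    intro m
    induction m using Nat.strong_induction_on with
    | _ m ih =>
      intro j hjm hnc
      have hjz : j ≠ z := fun h => hnc (h ▸ Equiv.Perm.SameCycle.refl σ z)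
      have h1 : ((σ j : ℕ) + 1) ∣ ((j : ℕ) + 1) := hdvd j hjz
      have hle : (σ j : ℕ) ≤ (j : ℕ) := by
        have := Nat.le_of_dvd (by omega) h1; omega
      by_contra hne
      have hlt : (σ j : ℕ) < (j : ℕ) :=
        lt_of_le_of_ne hle (fun h => hne (Fin.ext h))
      have hnc' : ¬ σ.SameCycle z (σ j) := fun h =>
        hnc (Equiv.Perm.sameCycle_apply_right.mp h)
      have := ih (σ j : ℕ) (by omega) (σ j) rfl hnc'
      exact hne (σ.injective this)
  refine ⟨fun j h => fix (j : ℕ) j rfl h, ?_⟩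
  -- chain part
  have hex : ∃ k, 0 < k ∧ (σ⁻¹ ^ k) z = z :=
    ⟨orderOf σ⁻¹, orderOf_pos σ⁻¹, by rw [pow_orderOf_eq_one]; rfl⟩
  classical
  let m := Nat.find hex
  have hm0 : 0 < m := (Nat.find_spec hex).1
  have hmz : (σ⁻¹ ^ m) z = z := (Nat.find_spec hex).2
  have hmin : ∀ k, 0 < k → k < m → (σ⁻¹ ^ k) z ≠ z := fun k hk hkm h =>
    Nat.find_min hex hkm ⟨hk, h⟩
  have hstep : ∀ k, k + 1 < m →
      (((σ⁻¹ ^ k) z : ℕ) + 1) ∣ (((σ⁻¹ ^ (k + 1)) z : ℕ) + 1) := by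
    intro k hk
    have hne : (σ⁻¹ ^ (k + 1)) z ≠ z := hmin (k + 1) (Nat.succ_pos k) hk
    have happ : σ ((σ⁻¹ ^ (k + 1)) z) = (σ⁻¹ ^ k) z := by
      rw [pow_succ']
      simp [Equiv.Perm.mul_apply]
    have := hdvd ((σ⁻¹ ^ (k + 1)) z) hne
    rwa [happ] at this
  have hchain : ∀ l, l < m → ∀ k, k ≤ l →
      (((σ⁻¹ ^ k) z : ℕ) + 1) ∣ (((σ⁻¹ ^ l) z : ℕ) + 1) := by
    intro l
    induction l with
    | zero => intro _ k hk; interval_cases k; exact dvd_rfl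
    | succ l ih =>
      intro hl k hk
      rcases Nat.eq_or_lt_of_le hk with heq | hlt
      · subst heq; exact dvd_rfl
      · exact (ih (by omega) k (by omega)).trans (hstep l hl)
  have hper : ∀ q, (σ⁻¹ ^ (m * q)) z = z := by
    intro q
    induction q with
    | zero => simp
    | succ q ih =>
      have : m * (q + 1) = m * q + m := by ring
      rw [this, pow_add, Equiv.Perm.mul_apply, hmz, ih]
  have hrep : ∀ j : Fin n, σ.SameCycle z j → ∃ k, k < m ∧ (σ⁻¹ ^ k) z = j := by
    intro j h
    obtain ⟨i, hi, hij⟩ := (Equiv.Perm.sameCycle_inv.mpr h).exists_pow_eq'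
    refine ⟨i % m, Nat.mod_lt _ hm0, ?_⟩
    have : (σ⁻¹ ^ i) z = (σ⁻¹ ^ (i % m)) z := by
      conv_lhs => rw [← Nat.div_add_mod i m]
      rw [pow_add, pow_mul_comm, Equiv.Perm.mul_apply, hper (i / m)]
    rw [← this, hij]
  intro a ha b hb hne
  obtain ⟨ka, hka, rfl⟩ := hrep a ha
  obtain ⟨kb, hkb, rfl⟩ := hrep b hb
  rcases le_total ka kb with h | h
  · exact Or.inl (hchain kb hkb ka h)
  · exact Or.inr (hchain ka hka kb h)
end

section
/- Let S be a finite partially ordered set with a least element 0, enumerated so that its zeta matrix ζ (with ζ[x][y] = 1 if x ≤ y, else 0) is upper-triangular. Let R(S) be the matrix obtained from ζ by replacing the column indexed by 0 with all 1's. Then det(R(S)) = ∑_{x ∈ S} μ(0, x), where μ is the Möbius function of the poset S. -/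
open Matrix Finset

variable {S : Type*}

/-- The Redheffer matrix of a finite poset with a least element `⊥`: the zeta matrix with
the column indexed by `⊥` replaced by all `1`'s. -/
def posetRedheffer [PartialOrder S] [OrderBot S] [Fintype S] [DecidableEq S]
    [DecidableRel (α := S) (· ≤ ·)] : Matrix S S ℤ :=
  fun x y => if x ≤ y ∨ y = ⊥ then 1 else 0

lemma zetaMatrix_det [PartialOrder S] [Fintype S] [DecidableEq S]
    [DecidableRel (α := S) (· ≤ ·)] :
    (Matrix.of fun x y : S => if x ≤ y then (1 : ℤ) else 0).det = 1 := by
  classical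
  haveI : Fintype (LinearExtension S) := ‹Fintype S›
  let e : S ≃ LinearExtension S := Equiv.cast rfl
  have he : ∀ x y : S, x ≤ y → toLinearExtension x ≤ toLinearExtension y :=
    fun x y h => toLinearExtension.monotone h
  have hee : ∀ x : S, toLinearExtension x = e x := fun _ => rfl
  rw [← Matrix.det_submatrix_equiv_self e.symm]
  rw [Matrix.det_of_upperTriangular]
  · rw [Finset.prod_eq_one]
    intro i _
    simp [Matrix.submatrix_apply]
  · intro i j hij
    simp only [Matrix.submatrix_apply, Matrix.of_apply, ite_eq_right_iff]
    intro hle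
    exfalso
    have := he _ _ hle
    rw [hee, hee, e.apply_symm_apply, e.apply_symm_apply] at this
    exact absurd this (not_le_of_gt hij)

lemma key_sum [PartialOrder S] [Fintype S] [DecidableEq S]
    [DecidableRel (α := S) (· ≤ ·)] [LocallyFiniteOrder S] (x : S) :
    ∑ z : S, (if x ≤ z then (1 : ℤ) else 0) *
      (∑ w : S, if z ≤ w then IncidenceAlgebra.mu ℤ z w else 0) = 1 := by
  classical
  simp_rw [Finset.mul_sum]
  rw [Finset.sum_comm]
  have hw : ∀ w : S, ∑ z : S, (if x ≤ z then (1 : ℤ) else 0) *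
      (if z ≤ w then IncidenceAlgebra.mu ℤ z w else 0) = if x = w then 1 else 0 := by
    intro w
    have h := congrFun (congrFun (congrArg DFunLike.coe
      (IncidenceAlgebra.zeta_mul_mu (𝕜 := ℤ) (α := S))) x) w
    rw [IncidenceAlgebra.mul_apply, IncidenceAlgebra.one_apply] at h
    rw [← h]
    calc ∑ z : S, (if x ≤ z then (1 : ℤ) else 0) *
          (if z ≤ w then IncidenceAlgebra.mu ℤ z w else 0)
        = ∑ z ∈ Icc x w, (if x ≤ z then (1 : ℤ) else 0) *
          (if z ≤ w then IncidenceAlgebra.mu ℤ z w else 0) := by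
          refine (Finset.sum_subset (Finset.subset_univ _) ?_).symm
          intro z _ hz
          rw [Finset.mem_Icc, not_and_or] at hz
          rcases hz with h1 | h1 <;> simp [h1]
      _ = ∑ z ∈ Icc x w, IncidenceAlgebra.zeta ℤ x z * IncidenceAlgebra.mu ℤ z w := by
          refine Finset.sum_congr rfl fun z hz => ?_
          obtain ⟨h1, h2⟩ := Finset.mem_Icc.mp hz
          simp [h1, h2]
  simp_rw [hw]
  simp

/-- The determinant of the Redheffer matrix of a finite poset with least element `0 = ⊥`
is `∑_{x ∈ S} μ(0, x)`. -/
theorem posetRedheffer_det [PartialOrder S] [OrderBot S] [Fintype S] [DecidableEq S]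
    [DecidableRel (α := S) (· ≤ ·)] [LocallyFiniteOrder S] :
    (posetRedheffer (S := S)).det = ∑ x : S, IncidenceAlgebra.mu ℤ (⊥ : S) x := by
  classical
  set c : S → ℤ := fun z => ∑ w : S, if z ≤ w then IncidenceAlgebra.mu ℤ z w else 0 with hc
  set Z : Matrix S S ℤ := Matrix.of fun x y : S => if x ≤ y then (1 : ℤ) else 0 with hZ
  set A : Matrix S S ℤ := (1 : Matrix S S ℤ).updateCol ⊥ c with hA
  have hRA : posetRedheffer (S := S) = Z * A := by
    ext x y
    rw [Matrix.mul_apply]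
    by_cases hy : y = ⊥
    · subst hy
      simp only [Matrix.updateCol_self, hA]
      have := key_sum (S := S) x
      simp only [posetRedheffer, or_true, if_true]
      rw [← this]
      rfl
    · have hAy : ∀ z, A z y = if z = y then 1 else 0 := by
        intro z
        simp [hA, Matrix.updateCol_apply, hy, Matrix.one_apply]
      simp only [hAy, mul_ite, mul_one, mul_zero]
      rw [Finset.sum_ite_eq' Finset.univ y]
      simp [posetRedheffer, hy, hZ]
  rw [hRA, Matrix.det_mul]
  have hdetZ : Z.det = 1 := zetaMatrix_det
  have hdetA : A.det = c ⊥ := by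
    rw [hA, ← Matrix.cramer_apply, Matrix.cramer_one]
    rfl
  rw [hdetZ, hdetA, one_mul, hc]
  simp [bot_le]
end

section
/- Let S be a finite poset with a least element 0, and let R(S) be the S×S matrix with R(S)[x][y] = 1 if x ≤ y or y = 0, else 0. Then the permanent of R(S) equals the number of chains of S that contain the element 0 (including the singleton chain {0}). -/
open Matrix Finset

variable {S : Type*}

/-!
Expanding the permanent, it counts the permutations `σ` with `σ x ≤ x` for all `x ≠ ⊥`. For such
a `σ`, a point outside the cycle of `⊥` is fixed, since its orbit can only descend yet must return
to it; and the cycle `⊥ ↦ σ ⊥ ↦ σ² ⊥ ↦ ⋯` strictly decreases after its first step, so it is a chain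
through `⊥` on which `σ` sends `⊥` to the top and every other point to the next smaller one. Hence
`σ ↦ {⊥} ∪ supp σ` is a bijection onto the chains containing `⊥`; conversely a chain with top `t`
is realised by splicing `t` into the cycle of the chain without `t`, i.e. multiplying by
`swap ⊥ t`.
-/

open Equiv Equiv.Perm Function

theorem Equiv.Perm.SameCycle.exists_iterate_lt_minimalPeriod {α : Type*} [Finite α]
    {σ : Perm α} {a b : α} (h : σ.SameCycle a b) :
    ∃ n < minimalPeriod σ a, σ^[n] a = b := by
  obtain ⟨i, hi⟩ := h.exists_nat_pow_eq
  refine ⟨i % minimalPeriod σ a,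
    Nat.mod_lt _ (minimalPeriod_pos_of_mem_periodicPts (σ.injective.mem_periodicPts a)), ?_⟩
  rwa [iterate_mod_minimalPeriod_eq, ← coe_pow]

theorem Equiv.Perm.insert_support_mul_swap {α : Type*} [Fintype α] [DecidableEq α]
    {σ : Perm α} {a b : α} (hab : a ≠ b) (hb : σ b = b) :
    insert a (σ * swap a b).support = insert b (insert a σ.support) := by
  have hσa : σ a ≠ b := fun h => hab (σ.injective (h.trans hb.symm))
  ext x
  simp only [mem_insert, Perm.mem_support, Perm.mul_apply]
  rcases eq_or_ne x a with rfl | hxa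
  · simp
  rcases eq_or_ne x b with rfl | hxb
  · simp [hσa]
  · simp [swap_apply_of_ne_of_ne hxa hxb, hxa, hxb]

section Descent

variable [PartialOrder S] [OrderBot S]

def DescendsOffBot (f : S → S) : Prop := ∀ x, x ≠ ⊥ → f x ≤ x

namespace DescendsOffBot

theorem iterate_le {f : S → S} (hf : DescendsOffBot f) {x : S} {n : ℕ}
    (hx : ∀ k < n, f^[k] x ≠ ⊥) : f^[n] x ≤ x := by
  induction n with
  | zero => exact le_rfl
  | succ n ih =>
    rw [iterate_succ_apply']
    exact (hf _ (hx n n.lt_succ_self)).trans (ih fun k hk => hx k (by omega))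

theorem antitoneOn_iterate_bot {f : S → S} (hf : DescendsOffBot f) :
    AntitoneOn (fun n => f^[n] ⊥) (Set.Ico 1 (minimalPeriod f ⊥)) := by
  rintro a ⟨ha, -⟩ b ⟨-, hb⟩ hab
  obtain ⟨n, rfl⟩ := Nat.exists_eq_add_of_le hab
  dsimp only
  rw [add_comm, iterate_add_apply]
  refine hf.iterate_le fun k hk => ?_
  rw [← iterate_add_apply]
  exact not_isPeriodicPt_of_pos_of_lt_minimalPeriod (by omega) (by omega)

section Finite

variable [Finite S] {σ τ : Perm S}

theorem apply_eq_self_of_not_sameCycle (hσ : DescendsOffBot σ) {x : S}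
    (hx : ¬σ.SameCycle ⊥ x) : σ x = x := by
  obtain ⟨n, hn⟩ := (sameCycle_apply_left.2 (SameCycle.refl σ x)).exists_nat_pow_eq
  have avoid_bot : ∀ k, σ^[k] (σ x) ≠ ⊥ := fun k hk => by
    have : σ.SameCycle ⊥ ((σ ^ k) (σ x)) := by rw [coe_pow, hk]
    exact hx (sameCycle_apply_right.1 (sameCycle_pow_right.1 this))
  refine le_antisymm (hσ x ?_) ?_
  · rintro rfl
    exact hx (SameCycle.refl σ ⊥)
  · calc x = σ^[n] (σ x) := by rw [← coe_pow, hn]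
      _ ≤ σ x := hσ.iterate_le fun k _ => avoid_bot k

theorem isChain_sameCycle_bot (hσ : DescendsOffBot σ) :
    IsChain (· ≤ ·) {x | σ.SameCycle ⊥ x} := by
  rintro x hx y hy -
  obtain ⟨a, ha, rfl⟩ := SameCycle.exists_iterate_lt_minimalPeriod hx
  obtain ⟨b, hb, rfl⟩ := SameCycle.exists_iterate_lt_minimalPeriod hy
  rcases Nat.eq_zero_or_pos a with rfl | ha0
  · exact Or.inl bot_le
  rcases Nat.eq_zero_or_pos b with rfl | hb0
  · exact Or.inr bot_le
  rcases le_total a b with hab | hba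
  · exact Or.inr (hσ.antitoneOn_iterate_bot ⟨ha0, ha⟩ ⟨hb0, hb⟩ hab)
  · exact Or.inl (hσ.antitoneOn_iterate_bot ⟨hb0, hb⟩ ⟨ha0, ha⟩ hba)

theorem le_apply_of_sameCycle (hσ : DescendsOffBot σ) {x y : S} (hx : σ.SameCycle ⊥ x)
    (hy : σ.SameCycle ⊥ y) (hyx : y < x ∨ x = ⊥) : y ≤ σ x := by
  obtain ⟨a, ha, rfl⟩ := hx.exists_iterate_lt_minimalPeriod
  obtain ⟨b, hb, rfl⟩ := hy.exists_iterate_lt_minimalPeriod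
  rcases Nat.eq_zero_or_pos b with rfl | hb0
  · exact bot_le
  have hab : a < b := by
    by_contra! hba
    have hxy := hσ.antitoneOn_iterate_bot ⟨hb0, hb⟩ ⟨hb0.trans_le hba, ha⟩ hba
    have hx0 : σ^[a] ⊥ ≠ ⊥ := not_isPeriodicPt_of_pos_of_lt_minimalPeriod (by omega) ha
    rcases hyx with hlt | hbot
    · exact hlt.not_ge hxy
    · exact hx0 hbot
  rw [← iterate_succ_apply' σ a]
  exact hσ.antitoneOn_iterate_bot ⟨by omega, by omega⟩ ⟨hb0, hb⟩ hab

theorem apply_le_apply_of_sameCycle_bot_iff (hσ : DescendsOffBot σ) (hτ : DescendsOffBot τ)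
    (h : ∀ x, σ.SameCycle ⊥ x ↔ τ.SameCycle ⊥ x) (x : S) : σ x ≤ τ x := by
  by_cases hx : σ.SameCycle ⊥ x
  · refine hτ.le_apply_of_sameCycle ((h x).1 hx) ((h _).1 (sameCycle_apply_right.2 hx)) ?_
    rcases eq_or_ne x ⊥ with rfl | hx0
    · exact Or.inr rfl
    · exact Or.inl ((hσ x hx0).lt_of_ne fun hfix => hx0 (hx.eq_of_right hfix).symm)
  · rw [hσ.apply_eq_self_of_not_sameCycle hx, hτ.apply_eq_self_of_not_sameCycle (mt (h x).2 hx)]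

end Finite

variable [Fintype S] [DecidableEq S] {σ τ : Perm S}

theorem sameCycle_bot_iff_mem_insert_support (hσ : DescendsOffBot σ) {x : S} :
    σ.SameCycle ⊥ x ↔ x ∈ insert ⊥ σ.support := by
  rw [mem_insert, Perm.mem_support]
  refine ⟨fun hx => or_iff_not_imp_right.2 fun hfix => (hx.eq_of_right (not_not.1 hfix)).symm, ?_⟩
  rintro (rfl | hx)
  · exact SameCycle.refl σ ⊥
  · exact not_imp_comm.1 hσ.apply_eq_self_of_not_sameCycle hx

theorem isChain_insert_support (hσ : DescendsOffBot σ) :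
    IsChain (· ≤ ·) (↑(insert ⊥ σ.support) : Set S) := by
  convert hσ.isChain_sameCycle_bot using 1
  ext x
  exact hσ.sameCycle_bot_iff_mem_insert_support.symm

theorem eq_of_insert_support_eq (hσ : DescendsOffBot σ) (hτ : DescendsOffBot τ)
    (h : insert ⊥ σ.support = insert ⊥ τ.support) : σ = τ := by
  have hcycle : ∀ x, σ.SameCycle ⊥ x ↔ τ.SameCycle ⊥ x := fun x => by
    rw [hσ.sameCycle_bot_iff_mem_insert_support, hτ.sameCycle_bot_iff_mem_insert_support, h]
  ext x
  exact le_antisymm (hσ.apply_le_apply_of_sameCycle_bot_iff hτ hcycle x)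
    (hτ.apply_le_apply_of_sameCycle_bot_iff hσ (fun x => (hcycle x).symm) x)

end DescendsOffBot

variable [Fintype S] [DecidableEq S]

theorem exists_descendsOffBot_insert_support_eq (C : Finset S)
    (hC : IsChain (· ≤ ·) (C : Set S)) (hbot : ⊥ ∈ C) :
    ∃ σ : Perm S, DescendsOffBot σ ∧ insert ⊥ σ.support = C := by
  induction C using Finset.strongInduction with
  | H C ih =>
  obtain ⟨t, htC, htmax⟩ := C.exists_maximal ⟨⊥, hbot⟩
  have hle : ∀ y ∈ C, y ≤ t := fun y hy => (hC.total hy htC).elim id (htmax hy)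
  rcases eq_or_ne t ⊥ with rfl | ht
  · refine ⟨1, fun x _ => le_rfl, ?_⟩
    rw [Perm.support_one, insert_empty, eq_comm, eq_singleton_iff_unique_mem]
    exact ⟨hbot, fun y hy => le_bot_iff.1 (hle y hy)⟩
  obtain ⟨σ, hσ, hσC⟩ := ih (C.erase t) (erase_ssubset htC) (hC.mono (by simp))
    (mem_erase.2 ⟨ht.symm, hbot⟩)
  have hσt : σ t = t := by_contra fun h =>
    notMem_erase t C (hσC ▸ mem_insert_of_mem (Perm.mem_support.2 h))
  have hσbot : σ ⊥ ∈ C := mem_of_mem_erase <| hσC ▸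
    hσ.sameCycle_bot_iff_mem_insert_support.1 (sameCycle_apply_right.2 (SameCycle.refl σ ⊥))
  refine ⟨σ * swap ⊥ t, fun x hx => ?_, ?_⟩
  · rw [Perm.mul_apply]
    rcases eq_or_ne x t with rfl | hxt
    · rw [swap_apply_right]
      exact hle _ hσbot
    · rw [swap_apply_of_ne_of_ne hx hxt]
      exact hσ x hx
  · rw [insert_support_mul_swap ht.symm hσt, hσC, insert_erase htC]

theorem card_descendsOffBot_eq_card_chains :
    Nat.card {σ : Perm S // DescendsOffBot σ} =
      Nat.card {C : Finset S // IsChain (· ≤ ·) (C : Set S) ∧ (⊥ : S) ∈ C} := by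
  refine Nat.card_eq_of_bijective
    (fun σ => ⟨insert ⊥ σ.1.support, σ.2.isChain_insert_support, mem_insert_self _ _⟩)
    ⟨fun σ τ h => Subtype.ext (σ.2.eq_of_insert_support_eq τ.2 (congrArg Subtype.val h)),
      fun C => ?_⟩
  obtain ⟨σ, hσ, hσC⟩ := exists_descendsOffBot_insert_support_eq C.1 C.2.1 C.2.2
  exact ⟨⟨σ, hσ⟩, Subtype.ext hσC⟩

theorem posetRedheffer_permanent_eq_card [DecidableRel (α := S) (· ≤ ·)] :
    (posetRedheffer (S := S)).permanent = Nat.card {σ : Perm S // DescendsOffBot σ} := by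
  classical
  have hprod (σ : Perm S) :
      ∏ i, posetRedheffer (σ i) i = if DescendsOffBot σ then 1 else 0 := by
    simp only [posetRedheffer]
    rw [Fintype.prod_boole]
    exact if_congr (forall_congr' fun i => or_iff_not_imp_right) rfl rfl
  rw [permanent, sum_congr rfl fun σ _ => hprod σ, sum_boole, Nat.card_eq_fintype_card,
    Fintype.card_subtype]

end Descent

/-- The permanent of the Redheffer matrix of a finite poset with least element `0 = ⊥`
equals the number of chains of `S` containing `⊥` (including the singleton chain `{⊥}`). -/
theorem posetRedheffer_permanent [PartialOrder S] [OrderBot S] [Fintype S] [DecidableEq S]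
    [DecidableRel (α := S) (· ≤ ·)] :
    (posetRedheffer (S := S)).permanent =
      Nat.card {C : Finset S // IsChain (· ≤ ·) (C : Set S) ∧ (⊥ : S) ∈ C} := by
  rw [posetRedheffer_permanent_eq_card, card_descendsOffBot_eq_card_chains]
end

section
/- For n ≥ 2, the Mertens function M(n) = ∑_{k=1}^n μ(k) equals ∑_{r=2}^n ∑_φ (−1)^{k(φ)} + 1, where the inner sum is over ordered factorizations φ of r into factors ≥ 2 and k(φ) is the number of factors; equivalently, M(n) = 1 + ∑ over all nonempty ordered factorizations of integers in [2,n] of (−1)^{number of factors}. -/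
open Finset

/-- Finset of ordered factorizations of `r` into factors `≥ 2`
(including the empty factorization for `r = 1`). -/
def OF (r : ℕ) : Finset (List ℕ) :=
  if r = 1 then {[]} else
    (r.divisors.filter (fun d => 2 ≤ d)).attach.biUnion
      (fun d => ((OF (r / d.1)).image (fun l => d.1 :: l)))
decreasing_by
  have hd := d.2
  simp only [Finset.mem_filter, Nat.mem_divisors] at hd
  exact Nat.div_lt_self (Nat.pos_of_ne_zero hd.1.2) (by omega)

theorem mem_OF : ∀ r : ℕ, ∀ l : List ℕ, l ∈ OF r ↔ (∀ a ∈ l, 2 ≤ a) ∧ l.prod = r := by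
  intro r
  induction r using Nat.strong_induction_on with
  | _ r ih =>
    intro l
    rw [OF]
    split_ifs with h1
    · subst h1
      simp only [Finset.mem_singleton]
      constructor
      · rintro rfl; exact ⟨by simp, by simp⟩
      · rintro ⟨h2, h3⟩
        cases l with
        | nil => rfl
        | cons a t =>
          simp only [List.prod_cons] at h3
          have ha := h2 a (by simp)
          have : a ≤ 1 := Nat.le_of_dvd one_pos ⟨t.prod, h3.symm⟩
          omega
    · simp only [Finset.mem_biUnion, Finset.mem_attach, Finset.mem_image, true_and,
        Subtype.exists, Finset.mem_filter, Nat.mem_divisors]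
      constructor
      · rintro ⟨d, ⟨⟨hdvd, hr0⟩, hd2⟩, t, ht, rfl⟩
        have hlt : r / d < r := Nat.div_lt_self (Nat.pos_of_ne_zero hr0) (by omega)
        obtain ⟨ht2, htp⟩ := (ih _ hlt t).mp ht
        refine ⟨?_, ?_⟩
        · intro a ha
          rcases List.mem_cons.mp ha with rfl | ha'
          · exact hd2
          · exact ht2 a ha'
        · simp [List.prod_cons, htp, Nat.mul_div_cancel' hdvd]
      · rintro ⟨h2, h3⟩
        cases l with
        | nil => simp at h3; omega
        | cons a t =>
          simp only [List.prod_cons] at h3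
          have ha : 2 ≤ a := h2 a (by simp)
          have ht2 : ∀ x ∈ t, 2 ≤ x := fun x hx => h2 x (by simp [hx])
          have htpos : 0 < t.prod := List.prod_pos (fun x hx => by have := ht2 x hx; omega)
          have hr0 : r ≠ 0 := by rw [← h3]; positivity
          have hdvd : a ∣ r := ⟨t.prod, h3.symm⟩
          have hlt : r / a < r := Nat.div_lt_self (Nat.pos_of_ne_zero hr0) (by omega)
          have htp : t.prod = r / a := by
            rw [← h3, Nat.mul_div_cancel_left _ (by omega : 0 < a)]
          exact ⟨a, ⟨⟨hdvd, hr0⟩, ha⟩, t, (ih _ hlt t).mpr ⟨ht2, htp⟩, rfl⟩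

open ArithmeticFunction in
theorem sum_OF : ∀ r : ℕ, 1 ≤ r →
    (∑ l ∈ OF r, (-1 : ℤ) ^ l.length) = ArithmeticFunction.moebius r := by
  intro r
  induction r using Nat.strong_induction_on with
  | _ r ih =>
    intro hr
    rcases eq_or_lt_of_le hr with h1 | h2
    · rw [← h1]; rw [OF]; simp
    · -- r ≥ 2
      have h1 : r ≠ 1 := by omega
      have hr0 : r ≠ 0 := by omega
      rw [OF, if_neg h1]
      rw [Finset.sum_biUnion]
      · have hstep : ∀ d ∈ (r.divisors.filter (fun d => 2 ≤ d)).attach,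
            (∑ l ∈ (OF (r / d.1)).image (fun l => d.1 :: l), (-1 : ℤ) ^ l.length)
              = -(moebius (r / d.1)) := by
          intro d _
          have hd := d.2
          simp only [Finset.mem_filter, Nat.mem_divisors] at hd
          rw [Finset.sum_image (by intro x _ y _ h; injection h)]
          have hlt : r / d.1 < r := Nat.div_lt_self (Nat.pos_of_ne_zero hr0) (by omega)
          have hpos : 1 ≤ r / d.1 :=
            (Nat.one_le_div_iff (by omega)).mpr (Nat.le_of_dvd (by omega) hd.1.1)
          calc (∑ l ∈ OF (r / d.1), (-1 : ℤ) ^ (d.1 :: l).length)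
              = ∑ l ∈ OF (r / d.1), (-1) * (-1 : ℤ) ^ l.length := by
                apply Finset.sum_congr rfl; intro l _; rw [List.length_cons]; ring
            _ = -(moebius (r / d.1)) := by
                rw [← Finset.mul_sum, ih _ hlt hpos]; ring
        rw [Finset.sum_congr rfl hstep]
        rw [Finset.sum_attach (r.divisors.filter (fun d => 2 ≤ d))
          (fun d => -(moebius (r / d) : ℤ))]
        have hzero : (∑ d ∈ r.divisors, -(moebius (r / d) : ℤ)) = 0 := by
          rw [Finset.sum_neg_distrib, Nat.sum_div_divisors r (fun d => (moebius d : ℤ))]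
          have h := congrArg (fun f : ArithmeticFunction ℤ => f r)
            ArithmeticFunction.moebius_mul_coe_zeta
          simp only [ArithmeticFunction.coe_mul_zeta_apply, ArithmeticFunction.one_apply,
            if_neg h1] at h
          rw [h]; ring
        have hsplit := Finset.sum_filter_add_sum_filter_not r.divisors
          (fun d => 2 ≤ d) (fun d => -(moebius (r / d) : ℤ))
        have hone : r.divisors.filter (fun d => ¬ 2 ≤ d) = {1} := by
          ext d
          simp only [Finset.mem_filter, Nat.mem_divisors, Finset.mem_singleton]
          constructor
          · rintro ⟨⟨hdvd, _⟩, hd⟩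
            have := Nat.pos_of_dvd_of_pos hdvd (by omega)
            omega
          · rintro rfl
            exact ⟨⟨one_dvd _, hr0⟩, by omega⟩
        rw [hone, Finset.sum_singleton, Nat.div_one, hzero] at hsplit
        linarith
      · intro d hd e he hne
        apply Finset.disjoint_left.mpr
        intro l hl1 hl2
        rw [Finset.mem_image] at hl1 hl2
        obtain ⟨t1, _, rfl⟩ := hl1
        obtain ⟨t2, _, heq⟩ := hl2
        injection heq with h' _
        exact hne (Subtype.ext h'.symm)

open ArithmeticFunction in
theorem finsum_OF (r : ℕ) (hr : 2 ≤ r) :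
    (∑ᶠ φ : {l : List ℕ // (∀ a ∈ l, 2 ≤ a) ∧ l.prod = r},
      ((-1 : ℤ) ^ (φ : List ℕ).length)) = moebius r := by
  have hmem : ∀ l : List ℕ, l ∈ OF r ↔ (∀ a ∈ l, 2 ≤ a) ∧ l.prod = r := mem_OF r
  letI : Fintype {l : List ℕ // (∀ a ∈ l, 2 ≤ a) ∧ l.prod = r} := Fintype.subtype (OF r) hmem
  rw [finsum_eq_sum_of_fintype, ← Finset.sum_subtype (OF r) hmem (fun l => (-1 : ℤ) ^ l.length)]
  exact sum_OF r (by omega)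

/-- For `n ≥ 2`, the Mertens function `M(n) = ∑_{k=1}^n μ(k)` equals
`1 + ∑_{r=2}^n ∑_φ (-1)^{k(φ)}`, where the inner sum ranges over the ordered
factorizations `φ` of `r` into factors `≥ 2` and `k(φ)` is the number of factors. -/
theorem mertens_eq_sum_orderedFactorizations (n : ℕ) (hn : 2 ≤ n) :
    (∑ k ∈ Finset.Icc 1 n, ArithmeticFunction.moebius k) =
      1 + ∑ r ∈ Finset.Icc 2 n,
        ∑ᶠ φ : {l : List ℕ // (∀ a ∈ l, 2 ≤ a) ∧ l.prod = r},
          ((-1 : ℤ) ^ (φ : List ℕ).length) := by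
  have hins : Finset.Icc 1 n = insert 1 (Finset.Icc 2 n) := by
    ext k
    simp only [Finset.mem_Icc, Finset.mem_insert]
    omega
  rw [hins, Finset.sum_insert (by simp)]
  have : ∀ r ∈ Finset.Icc 2 n,
      (∑ᶠ φ : {l : List ℕ // (∀ a ∈ l, 2 ≤ a) ∧ l.prod = r},
        ((-1 : ℤ) ^ (φ : List ℕ).length)) = ArithmeticFunction.moebius r := by
    intro r hrm
    exact finsum_OF r (Finset.mem_Icc.mp hrm).1
  rw [Finset.sum_congr rfl this]
  simp
end
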